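/- For the Morrison–Pinkham example, the endomorphism of M = coker Ψ induced by the matrix b² + d·c equals multiplication by 0 composed on each side as in the relations: concretely, c·(b² + d·c) = 0 as a map M → R (i.e., the row vector c(b²+dc) lies in the row space of Ψ), and (b² + d·c)·d ≡ 0 as a map R → M (i.e., the column (b²+dc)d lies in the column space of Ψ). -/

import Mathlib

/-
Since `b² = -w • 1` and `c ⬝ᵥ d = w`, the matrix `b² + d c` equals `d c - (c ⬝ᵥ d) • 1`, and for any
row `c` and column `d` this matrix is killed by `c` on the left and by `d` on the right, already over
the polynomial ring. So both relations hold with the zero vector as witness.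
-/

open MvPolynomial

noncomputable section

abbrev S14 : Type := MvPolynomial (Fin 4) ℂ

def w14 : S14 := X 0
def x14 : S14 := X 1
def y14 : S14 := X 2
def z14 : S14 := X 3

def f14 (l : ℂ) : S14 :=
  x14^2 + y14^3 + w14*z14^2 + w14^3*y14 - C l * w14 * y14^2 - C l * w14^4

abbrev R14 (l : ℂ) : Type := S14 ⧸ Ideal.span {f14 l}

def pi14 (l : ℂ) : S14 →+* R14 l := Ideal.Quotient.mk (Ideal.span {f14 l})

def PsiMP14 (l : ℂ) : Matrix (Fin 4) (Fin 4) S14 :=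
  !![x14, y14, z14, -w14;
     -(y14 - C l * w14)*y14, x14, (y14 - C l * w14)*w14, z14;
     -w14*z14, -w14^2, x14, -y14;
     (y14 - C l * w14)*w14^2, -w14*z14, (y14 - C l * w14)*y14, x14]

def bMP14 : Matrix (Fin 4) (Fin 4) S14 :=
  !![0, 0, 1, 0; 0, 0, 0, -1; -w14, 0, 0, 0; 0, w14, 0, 0]

def dMP14 : Fin 4 → S14 := ![0, 0, 0, 1]

def cMP14 : Fin 4 → S14 := ![x14, -y14, -z14, w14]

def dcMP14 : Matrix (Fin 4) (Fin 4) S14 := Matrix.of fun i j => dMP14 i * cMP14 j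

/-- b² + d·c -/
def F14 : Matrix (Fin 4) (Fin 4) S14 := bMP14 * bMP14 + dcMP14

namespace Matrix

variable {n R S : Type*} [Fintype n]

theorem vecMul_vecMulVec_sub_dotProduct_smul_one [CommRing R] [DecidableEq n] (c d : n → R) :
    c ᵥ* (vecMulVec d c - (c ⬝ᵥ d) • 1) = 0 := by
  rw [vecMul_sub, vecMul_vecMulVec, vecMul_smul, vecMul_one, sub_self]

theorem vecMulVec_sub_dotProduct_smul_one_mulVec [CommRing R] [DecidableEq n] (c d : n → R) :
    (vecMulVec d c - (c ⬝ᵥ d) • 1) *ᵥ d = 0 := by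
  rw [sub_mulVec, vecMulVec_mulVec, smul_mulVec, one_mulVec, op_smul_eq_smul, sub_self]

variable [NonAssocSemiring R] [NonAssocSemiring S]

theorem vecMul_map_eq_zero (f : R →+* S) {v : n → R} {M : Matrix n n R} (h : v ᵥ* M = 0) :
    (f ∘ v) ᵥ* M.map f = 0 := by
  ext i
  rw [← RingHom.map_vecMul, h, Pi.zero_apply, map_zero, Pi.zero_apply]

theorem map_mulVec_eq_zero (f : R →+* S) {v : n → R} {M : Matrix n n R} (h : M *ᵥ v = 0) :
    M.map f *ᵥ (f ∘ v) = 0 := by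
  ext i
  rw [← RingHom.map_mulVec, h, Pi.zero_apply, map_zero, Pi.zero_apply]

end Matrix

open Matrix

theorem bMP14_mul_self : bMP14 * bMP14 = -w14 • (1 : Matrix (Fin 4) (Fin 4) S14) := by
  ext i j
  fin_cases i <;> fin_cases j <;> simp [bMP14, mul_apply, Fin.sum_univ_four]

theorem cMP14_dotProduct_dMP14 : cMP14 ⬝ᵥ dMP14 = w14 := by
  simp [cMP14, dMP14, dotProduct, Fin.sum_univ_four]

theorem F14_eq_vecMulVec_sub_smul_one :
    F14 = vecMulVec dMP14 cMP14 - (cMP14 ⬝ᵥ dMP14) • 1 := by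
  rw [F14, bMP14_mul_self, cMP14_dotProduct_dMP14, neg_smul, neg_add_eq_sub]
  rfl

theorem b_sq_plus_dc_relations (l : ℂ) :
    (∃ u : Fin 4 → R14 l,
      Matrix.vecMul u ((PsiMP14 l).map (pi14 l)) =
        Matrix.vecMul (fun j => pi14 l (cMP14 j)) (F14.map (pi14 l))) ∧
    (∃ u : Fin 4 → R14 l,
      ((PsiMP14 l).map (pi14 l)).mulVec u =
        (F14.map (pi14 l)).mulVec (fun i => pi14 l (dMP14 i))) := by
  have hc : cMP14 ᵥ* F14 = 0 := by
    rw [F14_eq_vecMulVec_sub_smul_one]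
    exact vecMul_vecMulVec_sub_dotProduct_smul_one cMP14 dMP14
  have hd : F14 *ᵥ dMP14 = 0 := by
    rw [F14_eq_vecMulVec_sub_smul_one]
    exact vecMulVec_sub_dotProduct_smul_one_mulVec cMP14 dMP14
  refine ⟨⟨0, ?_⟩, ⟨0, ?_⟩⟩
  · rw [zero_vecMul]
    exact (vecMul_map_eq_zero (pi14 l) hc).symm
  · rw [mulVec_zero]
    exact (map_mulVec_eq_zero (pi14 l) hd).symm

end
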